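/- arXiv:1501.01836 — 2 statements merged into one kernel-verified Lean document; each statement's English description precedes it below -/
import Mathlib

section
/- If g and g' are inner products on V such that g' v v ≥ g v v for every v ∈ V, then for every alternating m-form φ on V one has comass g' φ ≤ comass g φ. -/
open Matrix

/-- The Gram matrix of an `m`-tuple of vectors with respect to a bilinear form `g`. -/
noncomputable def gramMat {V : Type*} [AddCommGroup V] [Module ℝ V] (m : ℕ)
    (g : LinearMap.BilinForm ℝ V) (v : Fin m → V) : Matrix (Fin m) (Fin m) ℝ :=
  Matrix.of fun i j => g (v i) (v j)

/-- The comass of an alternating `m`-form `φ` with respect to a bilinear form `g`. -/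
noncomputable def comass {V : Type*} [AddCommGroup V] [Module ℝ V] (m : ℕ)
    (g : LinearMap.BilinForm ℝ V) (φ : V [⋀^Fin m]→ₗ[ℝ] ℝ) : ℝ :=
  sSup {x : ℝ | ∃ v : Fin m → V, (gramMat m g v).det ≠ 0 ∧
    x = φ v / Real.sqrt (gramMat m g v).det}

/-!
If `g ≤ g'` then `G_g(v) ≤ G_{g'}(v)` in the Loewner order, hence `det G_g(v) ≤ det G_{g'}(v)`,
so each quotient `|φ v| / √(det G_{g'}(v))` is at most the corresponding `g`-quotient. The sets of
quotients are symmetric under `v₀ ↦ -v₀`, which turns this into a comparison of suprema.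
Since `sSup` of a set unbounded above is `0`, one also needs that boundedness of the set of
quotients does not depend on the inner product: this follows from `g' ≤ C • g` and the
homogeneity of the quotients under scaling of the inner product.
-/

namespace Matrix

variable {n : Type*} [Fintype n] [DecidableEq n]

theorem PosSemidef.one_le_det_one_add {M : Matrix n n ℝ} (hM : M.PosSemidef) :
    1 ≤ (1 + M).det := by
  have hH : (1 + M).IsHermitian := isHermitian_one.add hM.isHermitian
  rw [hH.det_eq_prod_eigenvalues]
  refine Finset.one_le_prod fun i _ => ?_
  set v := hH.eigenvectorBasis i
  have hv : v.ofLp ⬝ᵥ v.ofLp = 1 := by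
    have := real_inner_self_eq_norm_sq v
    rw [hH.eigenvectorBasis.orthonormal.1 i, EuclideanSpace.inner_eq_star_dotProduct] at this
    simpa using this
  have hMv := hM.re_dotProduct_nonneg v.ofLp
  simp only [RCLike.ofReal_real_eq_id, id, hH.eigenvalues_eq i, add_mulVec, one_mulVec,
    dotProduct_add, star_trivial, RCLike.re_to_real] at hMv ⊢
  linarith

open scoped MatrixOrder in
theorem PosSemidef.det_le_det_add {A B : Matrix n n ℝ} (hA : A.PosSemidef) (hB : B.PosSemidef) :
    A.det ≤ (A + B).det := by
  by_cases hA0 : A.det = 0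
  · rw [hA0]
    exact (hA.add hB).det_nonneg
  set S := CFC.sqrt A
  have hS : S.IsHermitian := (CFC.sqrt_nonneg A).posSemidef.isHermitian
  have hSS : S * S = A := CFC.sqrt_mul_sqrt_self A hA.nonneg
  have hSunit : IsUnit S.det := by
    refine isUnit_iff_ne_zero.mpr fun h => hA0 ?_
    rw [← hSS, det_mul, h, zero_mul]
  have hM : (S⁻¹ * B * S⁻¹).PosSemidef := by
    simpa only [conjTranspose_nonsing_inv, hS.eq] using hB.conjTranspose_mul_mul_same S⁻¹
  have hAB : A + B = S * (1 + S⁻¹ * B * S⁻¹) * S := by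
    simp only [Matrix.mul_add, Matrix.add_mul, Matrix.mul_one, hSS, Matrix.mul_assoc,
      nonsing_inv_mul _ hSunit, mul_nonsing_inv_cancel_left _ _ hSunit, Matrix.mul_one]
  calc A.det = A.det * 1 := (mul_one _).symm
    _ ≤ A.det * (1 + S⁻¹ * B * S⁻¹).det :=
        mul_le_mul_of_nonneg_left hM.one_le_det_one_add hA.det_nonneg
    _ = (A + B).det := by rw [hAB, det_mul, det_mul, ← hSS, det_mul]; ring

end Matrix

namespace LinearMap.BilinForm

variable {V : Type*} [AddCommGroup V] [Module ℝ V]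

theorem apply_sum_smul_sum_smul {ι : Type*} [Fintype ι] (B : LinearMap.BilinForm ℝ V)
    (b : ι → V) (x y : ι → ℝ) :
    B (∑ i, x i • b i) (∑ j, y j • b j) = ∑ i, ∑ j, x i * y j * B (b i) (b j) := by
  simp only [map_sum, LinearMap.map_smul, LinearMap.sum_apply, LinearMap.smul_apply,
    smul_eq_mul, mul_assoc]
  exact Finset.sum_comm

theorem apply_self_nonneg_of_pos {g : LinearMap.BilinForm ℝ V} (hpos : ∀ u, u ≠ 0 → 0 < g u u)
    (u : V) : 0 ≤ g u u := by
  rcases eq_or_ne u 0 with rfl | hu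
  · simp
  · exact (hpos u hu).le

theorem apply_sum_smul_le {ι : Type*} [Fintype ι] (B : LinearMap.BilinForm ℝ V) (b : ι → V)
    (x : ι → ℝ) :
    B (∑ i, x i • b i) (∑ i, x i • b i) ≤ (∑ i, ∑ j, |B (b i) (b j)|) * ∑ i, x i ^ 2 := by
  set S := ∑ i, x i ^ 2
  have hx : ∀ k, |x k| ≤ Real.sqrt S := fun k =>
    Real.abs_le_sqrt (Finset.single_le_sum (fun i _ => sq_nonneg (x i)) (Finset.mem_univ k))
  rw [B.apply_sum_smul_sum_smul, Finset.sum_mul]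
  refine Finset.sum_le_sum fun i _ => ?_
  rw [Finset.sum_mul]
  refine Finset.sum_le_sum fun j _ => ?_
  calc x i * x j * B (b i) (b j) ≤ |x i| * |x j| * |B (b i) (b j)| := by
        rw [← abs_mul, ← abs_mul]
        exact le_abs_self _
    _ ≤ Real.sqrt S * Real.sqrt S * |B (b i) (b j)| := by gcongr <;> apply hx
    _ = |B (b i) (b j)| * S := by rw [Real.mul_self_sqrt (by positivity)]; ring

theorem apply_sum_smul_of_isOrthoᵢ {ι : Type*} [Fintype ι] {B : LinearMap.BilinForm ℝ V}
    {b : ι → V} (hb : B.IsOrthoᵢ b) (x : ι → ℝ) :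
    B (∑ i, x i • b i) (∑ i, x i • b i) = ∑ i, x i ^ 2 * B (b i) (b i) := by
  rw [B.apply_sum_smul_sum_smul]
  refine Finset.sum_congr rfl fun i _ => ?_
  rw [Finset.sum_eq_single i (fun j _ hji => by rw [hb hji.symm, mul_zero]) (by simp)]
  ring

theorem exists_apply_le_mul_apply [FiniteDimensional ℝ V] {g : LinearMap.BilinForm ℝ V}
    (hg : g.IsSymm) (hpos : ∀ u, u ≠ 0 → 0 < g u u) (g' : LinearMap.BilinForm ℝ V) :
    ∃ C > 0, ∀ u, g' u u ≤ C * g u u := by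
  obtain ⟨b, hb⟩ := exists_orthogonal_basis (isSymm_iff.mp hg)
  have hd : ∀ i, 0 < g (b i) (b i) := fun i => hpos _ (b.ne_zero i)
  set K := ∑ i, ∑ j, |g' (b i) (b j)|
  set D := ∑ i, (g (b i) (b i))⁻¹
  have hK : 0 ≤ K := by positivity
  have hD : 0 ≤ D := Finset.sum_nonneg fun i _ => (inv_pos.2 (hd i)).le
  refine ⟨K * D + 1, add_pos_of_nonneg_of_pos (mul_nonneg hK hD) one_pos, fun u => ?_⟩
  set x := b.repr u
  have hu : ∑ i, x i • b i = u := b.sum_repr u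
  have hgu : g u u = ∑ i, x i ^ 2 * g (b i) (b i) := by
    rw [← hu, g.apply_sum_smul_of_isOrthoᵢ hb]
  have hg0 : 0 ≤ g u u := hgu ▸ Finset.sum_nonneg fun i _ => mul_nonneg (sq_nonneg _) (hd i).le
  have hsq : ∑ i, x i ^ 2 ≤ D * g u u := by
    rw [Finset.sum_mul]
    refine Finset.sum_le_sum fun i _ => ?_
    calc x i ^ 2 = (g (b i) (b i))⁻¹ * (x i ^ 2 * g (b i) (b i)) := by
          field_simp [(hd i).ne']
      _ ≤ (g (b i) (b i))⁻¹ * g u u := by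
          rw [hgu]
          gcongr
          · exact (inv_pos.2 (hd i)).le
          · exact Finset.single_le_sum (f := fun j => x j ^ 2 * g (b j) (b j))
              (fun j _ => mul_nonneg (sq_nonneg _) (hd j).le) (Finset.mem_univ i)
  calc g' u u ≤ K * ∑ i, x i ^ 2 := hu ▸ g'.apply_sum_smul_le b x
    _ ≤ K * (D * g u u) := by gcongr
    _ ≤ (K * D + 1) * g u u := by nlinarith

end LinearMap.BilinForm

section Gram

variable {V : Type*} [AddCommGroup V] [Module ℝ V] {m : ℕ} {g : LinearMap.BilinForm ℝ V}

theorem dotProduct_gramMat_mulVec (g : LinearMap.BilinForm ℝ V) (v : Fin m → V) (x : Fin m → ℝ) :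
    x ⬝ᵥ (gramMat m g v *ᵥ x) = g (∑ i, x i • v i) (∑ j, x j • v j) := by
  simp only [g.apply_sum_smul_sum_smul, dotProduct, mulVec, gramMat, of_apply, Finset.mul_sum]
  exact Finset.sum_congr rfl fun i _ => Finset.sum_congr rfl fun j _ => by ring

theorem posSemidef_gramMat (hg : g.IsSymm) (hpos : ∀ u, 0 ≤ g u u) (v : Fin m → V) :
    (gramMat m g v).PosSemidef := by
  refine posSemidef_iff_dotProduct_mulVec.mpr ⟨?_, fun x => ?_⟩
  · ext i j
    exact hg.eq (v j) (v i)
  · rw [star_trivial, dotProduct_gramMat_mulVec]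
    exact hpos _

theorem posDef_gramMat (hg : g.IsSymm) (hpos : ∀ u, u ≠ 0 → 0 < g u u) {v : Fin m → V}
    (hv : LinearIndependent ℝ v) : (gramMat m g v).PosDef := by
  refine posDef_iff_dotProduct_mulVec.mpr
    ⟨(posSemidef_gramMat hg (g.apply_self_nonneg_of_pos hpos) v).1, fun x hx => ?_⟩
  have hxv : ∑ i, x i • v i ≠ 0 := fun h =>
    hx (funext fun i => Fintype.linearIndependent_iff.mp hv x h i)
  rw [star_trivial, dotProduct_gramMat_mulVec]
  exact hpos _ hxv

theorem linearIndependent_of_det_gramMat_ne_zero {v : Fin m → V} (h : (gramMat m g v).det ≠ 0) :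
    LinearIndependent ℝ v := by
  by_contra hv
  obtain ⟨c, hc, i, hci⟩ := Fintype.not_linearIndependent_iff.mp hv
  refine h (exists_mulVec_eq_zero_iff.mp ⟨c, fun h0 => hci (by simp [h0]), funext fun j => ?_⟩)
  have hj : (gramMat m g v *ᵥ c) j = g (v j) (∑ i, c i • v i) := by
    simp [mulVec, dotProduct, gramMat, mul_comm]
  rw [hj, hc, map_zero, Pi.zero_apply]

theorem det_gramMat_le_det_gramMat {g' : LinearMap.BilinForm ℝ V} (hg : g.IsSymm)
    (hpos : ∀ u, 0 ≤ g u u) (hg' : g'.IsSymm) (hle : ∀ u, g u u ≤ g' u u) (v : Fin m → V) :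
    (gramMat m g v).det ≤ (gramMat m g' v).det := by
  have hsub : (gramMat m (g' - g) v).PosSemidef :=
    posSemidef_gramMat (hg'.sub hg) (fun u => sub_nonneg.mpr (hle u)) v
  have hsum : gramMat m g v + gramMat m (g' - g) v = gramMat m g' v := by
    ext i j
    simp [gramMat]
  simpa [hsum] using (posSemidef_gramMat hg hpos v).det_le_det_add hsub

theorem gramMat_smul (c : ℝ) (g : LinearMap.BilinForm ℝ V) (v : Fin m → V) :
    gramMat m (c • g) v = c • gramMat m g v := by
  ext i j
  simp [gramMat]

theorem gramMat_pi_smul (g : LinearMap.BilinForm ℝ V) (c : Fin m → ℝ) (v : Fin m → V) :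
    gramMat m g (c • v) = diagonal c * gramMat m g v * diagonal c := by
  ext i j
  simp [gramMat, mul_comm, mul_left_comm]

end Gram

section Comass

open scoped Pointwise

variable {V : Type*} [AddCommGroup V] [Module ℝ V] {m : ℕ}

def comassSet (m : ℕ) (g : LinearMap.BilinForm ℝ V) (φ : V [⋀^Fin m]→ₗ[ℝ] ℝ) : Set ℝ :=
  {x : ℝ | ∃ v : Fin m → V, (gramMat m g v).det ≠ 0 ∧
    x = φ v / Real.sqrt (gramMat m g v).det}

theorem comass_eq_sSup (g : LinearMap.BilinForm ℝ V) (φ : V [⋀^Fin m]→ₗ[ℝ] ℝ) :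
    comass m g φ = sSup (comassSet m g φ) := rfl

variable {g : LinearMap.BilinForm ℝ V} {φ : V [⋀^Fin m]→ₗ[ℝ] ℝ}

theorem neg_mem_comassSet [NeZero m] {x : ℝ} (hx : x ∈ comassSet m g φ) :
    -x ∈ comassSet m g φ := by
  obtain ⟨v, hv, rfl⟩ := hx
  set c : Fin m → ℝ := Pi.mulSingle 0 (-1)
  have hc : ∏ i, c i = -1 := by simp [c]
  have hdet : (gramMat m g (c • v)).det = (gramMat m g v).det := by
    rw [gramMat_pi_smul, det_mul, det_mul, det_diagonal, hc]
    ring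
  refine ⟨c • v, hdet ▸ hv, ?_⟩
  rw [hdet, show c • v = fun i => c i • v i from rfl, φ.map_smul_univ, hc, neg_one_smul,
    neg_div]

theorem abs_mem_comassSet [NeZero m] {x : ℝ} (hx : x ∈ comassSet m g φ) :
    |x| ∈ comassSet m g φ := by
  rcases abs_choice x with h | h <;> rw [h]
  exacts [hx, neg_mem_comassSet hx]

theorem comass_nonneg [NeZero m] (g : LinearMap.BilinForm ℝ V) (φ : V [⋀^Fin m]→ₗ[ℝ] ℝ) :
    0 ≤ comass m g φ := by
  rw [comass_eq_sSup]
  rcases (comassSet m g φ).eq_empty_or_nonempty with h | ⟨x, hx⟩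
  · rw [h, Real.sSup_empty]
  · exact Real.sSup_nonneg' ⟨|x|, abs_mem_comassSet hx, abs_nonneg x⟩

theorem comassSet_smul {c : ℝ} (hc : 0 < c) (g : LinearMap.BilinForm ℝ V)
    (φ : V [⋀^Fin m]→ₗ[ℝ] ℝ) :
    comassSet m (c • g) φ = (Real.sqrt (c ^ m))⁻¹ • comassSet m g φ := by
  ext x
  simp only [comassSet, gramMat_smul, det_smul, Fintype.card_fin, Set.mem_smul_set,
    Set.mem_ofPred_eq, smul_eq_mul]
  constructor
  · rintro ⟨v, hv, rfl⟩
    have hv' : (gramMat m g v).det ≠ 0 := right_ne_zero_of_mul hv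
    refine ⟨_, ⟨v, hv', rfl⟩, ?_⟩
    rw [Real.sqrt_mul (by positivity)]
    ring
  · rintro ⟨_, ⟨v, hv, rfl⟩, rfl⟩
    refine ⟨v, mul_ne_zero (by positivity) hv, ?_⟩
    rw [Real.sqrt_mul (by positivity)]
    ring

theorem forall_exists_le_comassSet_of_le [NeZero m] {g' : LinearMap.BilinForm ℝ V}
    (hg : g.IsSymm) (hpos : ∀ u, u ≠ 0 → 0 < g u u) (hg' : g'.IsSymm)
    (hle : ∀ u, g u u ≤ g' u u) : ∀ x ∈ comassSet m g' φ, ∃ y ∈ comassSet m g φ, x ≤ y := by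
  rintro _ ⟨v, hv, rfl⟩
  have hdet : 0 < (gramMat m g v).det :=
    (posDef_gramMat hg hpos (linearIndependent_of_det_gramMat_ne_zero hv)).det_pos
  have hmono := det_gramMat_le_det_gramMat hg (g.apply_self_nonneg_of_pos hpos) hg' hle v
  refine ⟨|φ v / Real.sqrt (gramMat m g v).det|, abs_mem_comassSet ⟨v, hdet.ne', rfl⟩, ?_⟩
  rw [abs_div, abs_of_nonneg (Real.sqrt_nonneg _)]
  calc φ v / Real.sqrt (gramMat m g' v).det
      ≤ |φ v| / Real.sqrt (gramMat m g' v).det := by gcongr; exact le_abs_self _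
    _ ≤ |φ v| / Real.sqrt (gramMat m g v).det := by gcongr

theorem bddAbove_comassSet_of_bddAbove [FiniteDimensional ℝ V] [NeZero m]
    {g' : LinearMap.BilinForm ℝ V} (hg : g.IsSymm) (hpos : ∀ u, u ≠ 0 → 0 < g u u)
    (hg' : g'.IsSymm) (hpos' : ∀ u, u ≠ 0 → 0 < g' u u) (h : BddAbove (comassSet m g' φ)) :
    BddAbove (comassSet m g φ) := by
  obtain ⟨C, hC, hg'C⟩ := g.exists_apply_le_mul_apply hg hpos g'
  have hdom := forall_exists_le_comassSet_of_le (φ := φ) hg' hpos' (hg.smul C) hg'C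
  obtain ⟨b, hb⟩ := h
  rw [← bddAbove_smul_iff_of_pos (inv_pos.2 (Real.sqrt_pos.2 (pow_pos hC m))),
    ← comassSet_smul hC]
  exact ⟨b, fun x hx => let ⟨y, hy, hxy⟩ := hdom x hx; hxy.trans (hb hy)⟩

end Comass

theorem comass_antitone_general {V : Type*} [AddCommGroup V] [Module ℝ V]
    [FiniteDimensional ℝ V] (m : ℕ) (hm : 1 ≤ m)
    (g g' : LinearMap.BilinForm ℝ V)
    (hgsymm : g.IsSymm) (hgpos : ∀ v : V, v ≠ 0 → 0 < g v v)
    (hg'symm : g'.IsSymm) (hg'pos : ∀ v : V, v ≠ 0 → 0 < g' v v)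
    (hle : ∀ v : V, g v v ≤ g' v v)
    (φ : V [⋀^Fin m]→ₗ[ℝ] ℝ) :
    comass m g' φ ≤ comass m g φ := by
  have : NeZero m := ⟨by omega⟩
  have hdom := forall_exists_le_comassSet_of_le (φ := φ) hgsymm hgpos hg'symm hle
  by_cases hbdd : BddAbove (comassSet m g φ)
  · exact Real.sSup_le (fun x hx => let ⟨y, hy, hxy⟩ := hdom x hx; hxy.trans (le_csSup hbdd hy))
      (comass_nonneg g φ)
  · have hbdd' : ¬ BddAbove (comassSet m g' φ) :=
      mt (bddAbove_comassSet_of_bddAbove (φ := φ) hgsymm hgpos hg'symm hg'pos) hbdd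
    rw [comass_eq_sSup, comass_eq_sSup, Real.sSup_of_not_bddAbove hbdd,
      Real.sSup_of_not_bddAbove hbdd']

theorem comass_antitone {V : Type*} [AddCommGroup V] [Module ℝ V]
    [FiniteDimensional ℝ V] (m : ℕ) (hm : 1 ≤ m) (hm' : m ≤ Module.finrank ℝ V)
    (g g' : LinearMap.BilinForm ℝ V)
    (hgsymm : g.IsSymm) (hgpos : ∀ v : V, v ≠ 0 → 0 < g v v)
    (hg'symm : g'.IsSymm) (hg'pos : ∀ v : V, v ≠ 0 → 0 < g' v v)
    (hle : ∀ v : V, g v v ≤ g' v v)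
    (φ : V [⋀^Fin m]→ₗ[ℝ] ℝ) :
    comass m g' φ ≤ comass m g φ :=
  comass_antitone_general m hm g g' hgsymm hgpos hg'symm hg'pos hle φ
end

section
/- Let M be an m-dimensional linear subspace of E, let π : E →ₗ[ℝ] M be a linear projection onto M (π x = x for every x ∈ M), and let ω be an alternating m-form on M such that ω b = 1 for some orthonormal basis b of M. Then comass (π*ω) = 1 if and only if ker π = Mᗮ, the orthogonal complement of M in E. -/
open Matrix

/-- The Gram matrix of an `m`-tuple of vectors in a real inner product space. -/
noncomputable def gramIP {E : Type*} [NormedAddCommGroup E] [InnerProductSpace ℝ E]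
    (m : ℕ) (v : Fin m → E) : Matrix (Fin m) (Fin m) ℝ :=
  Matrix.of fun i j => (inner ℝ (v i) (v j) : ℝ)

/-- The comass of an alternating `m`-form on a real inner product space. -/
noncomputable def comassIP {E : Type*} [NormedAddCommGroup E] [InnerProductSpace ℝ E]
    (m : ℕ) (φ : E [⋀^Fin m]→ₗ[ℝ] ℝ) : ℝ :=
  sSup {x : ℝ | ∃ v : Fin m → E, (gramIP m v).det ≠ 0 ∧
    x = φ v / Real.sqrt (gramIP m v).det}

/-!
Write `v i = π (v i) + w i`. If `ker π ⊆ Mᗮ`, the `w i` are orthogonal to `M`, so the Gram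
matrix of `v` is the sum of the positive semidefinite Gram matrices of `π ∘ v` and `w`, and its
determinant dominates that of `π ∘ v`, which is `ω (π ∘ v) ^ 2` since `ω` is the volume form of
`b`. Hence `(π*ω) v ≤ √(det G(v))`, with equality at `v = b`. Conversely, if some `k ∈ ker π`
is not orthogonal to `M`, tilting `b` along `k` (`v i = b i + t ⟪b i, k⟫ k`) keeps `π ∘ v = b`
and, for a suitable `t < 0`, gives `0 < det G(v) < 1`, so the comass exceeds one. Finally
`ker π ⊆ Mᗮ` forces equality because `x - π x ∈ ker π` for every `x`.
-/

open scoped InnerProductSpace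

theorem Matrix.PosSemidef.one_le_det_one_add_s7 {n : Type*} [Fintype n] [DecidableEq n]
    {C : Matrix n n ℝ} (hC : C.PosSemidef) : 1 ≤ (1 + C).det := by
  have hH : (1 + C).IsHermitian := isHermitian_one.add hC.1
  rw [hH.det_eq_prod_eigenvalues]
  refine Finset.one_le_prod fun i _ => ?_
  have hunit : star ⇑(hH.eigenvectorBasis i) ⬝ᵥ ⇑(hH.eigenvectorBasis i) = 1 := by
    rw [dotProduct_comm, ← EuclideanSpace.inner_eq_star_dotProduct]
    simp [hH.eigenvectorBasis.orthonormal.1 i]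
  have hC_nonneg := hC.dotProduct_mulVec_nonneg (hH.eigenvectorBasis i)
  rw [hH.eigenvalues_eq i, add_mulVec, one_mulVec, dotProduct_add, hunit]
  simpa using hC_nonneg

open scoped MatrixOrder in
theorem Matrix.PosSemidef.det_le_det_add_s7 {n : Type*} [Fintype n] [DecidableEq n]
    {A B : Matrix n n ℝ} (hA : A.PosSemidef) (hB : B.PosSemidef) : A.det ≤ (A + B).det := by
  obtain ⟨S, rfl⟩ := CStarAlgebra.nonneg_iff_eq_star_mul_self.mp hA.nonneg
  rw [star_eq_conjTranspose]
  by_cases hS : IsUnit S.det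
  · have hSH : IsUnit Sᴴ.det := by rwa [det_conjTranspose, star_trivial]
    have hfactor : Sᴴ * S + B = Sᴴ * (1 + S⁻¹ᴴ * B * S⁻¹) * S := by
      rw [conjTranspose_nonsing_inv, Matrix.mul_add, Matrix.add_mul, Matrix.mul_one,
        ← Matrix.mul_assoc, ← Matrix.mul_assoc, mul_nonsing_inv _ hSH, Matrix.one_mul,
        Matrix.mul_assoc, nonsing_inv_mul _ hS, Matrix.mul_one]
    have h1 := (hB.conjTranspose_mul_mul_same S⁻¹).one_le_det_one_add_s7
    rw [hfactor, det_mul, det_mul, det_mul, det_conjTranspose, star_trivial]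
    nlinarith [mul_self_nonneg S.det]
  · rw [isUnit_iff_ne_zero, not_not] at hS
    rw [det_mul, hS, mul_zero]
    exact (hA.add hB).det_nonneg

section Gram

variable {E ι : Type*} [NormedAddCommGroup E] [InnerProductSpace ℝ E]

theorem gramIP_eq_gram {m : ℕ} (v : Fin m → E) : gramIP m v = gram ℝ v := rfl

theorem Matrix.gram_add_of_inner_eq_zero {u w : ι → E} (h : ∀ i j, ⟪u i, w j⟫_ℝ = 0) :
    gram ℝ (u + w) = gram ℝ u + gram ℝ w := by
  ext i j
  simp only [gram_apply, Pi.add_apply, add_apply, inner_add_left, inner_add_right, h,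
    real_inner_comm (u j) (w i)]
  ring

variable [Fintype ι] [DecidableEq ι]

theorem Matrix.det_gram_eq_basis_det_sq (b : OrthonormalBasis ι ℝ E) (v : ι → E) :
    (gram ℝ v).det = b.toBasis.det v ^ 2 := by
  rw [gram_eq_conjTranspose_mul b, det_mul, det_conjTranspose, star_trivial, sq,
    Module.Basis.det_apply]
  rfl

theorem Matrix.det_gram_orthonormal_add_smul {e : ι → E} (he : Orthonormal ℝ e) (k : E) (t : ℝ) :
    (gram ℝ fun i => e i + (t * ⟪e i, k⟫_ℝ) • k).det
      = 1 + (2 * t + t ^ 2 * ‖k‖ ^ 2) * ∑ i, ⟪e i, k⟫_ℝ ^ 2 := by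
  set c : ι → ℝ := fun i => ⟪e i, k⟫_ℝ
  have hgram : (gram ℝ fun i => e i + (t * c i) • k)
      = 1 + vecMulVec (fun i => (2 * t + t ^ 2 * ‖k‖ ^ 2) * c i) c := by
    ext i j
    rw [orthonormal_iff_ite] at he
    simp only [gram_apply, inner_add_left, inner_add_right, real_inner_smul_left,
      real_inner_smul_right, he, real_inner_self_eq_norm_sq, real_inner_comm (e j) k, add_apply,
      one_apply, vecMulVec_apply, c]
    ring
  rw [hgram, vecMulVec_eq Unit, det_one_add_replicateCol_mul_replicateRow, dotProduct,
    Finset.mul_sum]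
  simp only [sq, c]
  congr 1
  exact Finset.sum_congr rfl fun i _ => by ring

end Gram

theorem exists_one_add_mul_mem_Ioo {C K : ℝ} (hC : 0 < C) (hK : 0 ≤ K) :
    ∃ t : ℝ, 1 + (2 * t + t ^ 2 * K) * C ∈ Set.Ioo 0 1 := by
  set t := -1 / (K + 2 * C + 1)
  have ht : t * (K + 2 * C + 1) = -1 := by simp only [t]; field_simp
  have ht_neg : t < 0 := div_neg_of_neg_of_pos (by norm_num) (by positivity)
  have htK : t * K ≤ 0 := mul_nonpos_of_nonpos_of_nonneg ht_neg.le hK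
  have htC : -1 < 2 * t * C := by linarith
  refine ⟨t, ?_, ?_⟩
  · nlinarith [mul_nonpos_of_nonpos_of_nonneg htK (mul_nonneg (neg_nonneg.2 ht_neg.le) hC.le)]
  · nlinarith [mul_neg_of_neg_of_pos ht_neg hC]

theorem div_sqrt_det_le_comassIP {E : Type*} [NormedAddCommGroup E] [InnerProductSpace ℝ E]
    {m : ℕ} {φ : E [⋀^Fin m]→ₗ[ℝ] ℝ} (hφ : comassIP m φ ≠ 0) {v : Fin m → E}
    (hv : (gramIP m v).det ≠ 0) : φ v / √(gramIP m v).det ≤ comassIP m φ := by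
  by_cases hbdd : BddAbove {x : ℝ | ∃ v : Fin m → E, (gramIP m v).det ≠ 0 ∧
      x = φ v / √(gramIP m v).det}
  · exact le_csSup hbdd ⟨v, hv, rfl⟩
  · exact absurd (Real.sSup_of_not_bddAbove hbdd) hφ

section Projection

variable {E ι : Type*} [NormedAddCommGroup E] [InnerProductSpace ℝ E] {M : Submodule ℝ E}
  {π : E →ₗ[ℝ] M}

theorem Module.Basis.mem_orthogonal_of_inner_eq_zero [Fintype ι] (b : Module.Basis ι ℝ M) {k : E}
    (h : ∀ i, ⟪(b i : E), k⟫_ℝ = 0) : k ∈ Mᗮ := by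
  refine (Submodule.mem_orthogonal M k).2 fun x hx => ?_
  rw [← Submodule.coe_mk x hx, ← b.sum_repr ⟨x, hx⟩, Submodule.coe_sum, sum_inner]
  simp [real_inner_smul_left, h]

variable (hπ : ∀ x : M, π x = x)
include hπ

theorem sub_apply_mem_ker (x : E) : x - π x ∈ LinearMap.ker π := by
  simp [hπ]

theorem ker_eq_orthogonal_of_ker_le (h : LinearMap.ker π ≤ Mᗮ) : LinearMap.ker π = Mᗮ := by
  refine le_antisymm h fun x hx => ?_
  have hπx : (π x : E) ∈ Mᗮ := by
    simpa using Mᗮ.sub_mem hx (h (sub_apply_mem_ker hπ x))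
  have : (π x : E) = 0 := Submodule.disjoint_def.1 M.orthogonal_disjoint _ (π x).2 hπx
  simpa using this

theorem basis_det_comp_sq_le_det_gram (h : LinearMap.ker π ≤ Mᗮ) [Fintype ι] [DecidableEq ι]
    (b : OrthonormalBasis ι ℝ M) (v : ι → E) :
    b.toBasis.det (π ∘ v) ^ 2 ≤ (gram ℝ v).det := by
  set u : ι → E := fun i => π (v i)
  have horth : ∀ i j, ⟪u i, (v - u) j⟫_ℝ = 0 := fun i j =>
    Submodule.inner_right_of_mem_orthogonal (π (v i)).2 (h (sub_apply_mem_ker hπ (v j)))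
  have hsplit : gram ℝ v = gram ℝ u + gram ℝ (v - u) := by
    rw [← gram_add_of_inner_eq_zero horth, add_sub_cancel]
  rw [← det_gram_eq_basis_det_sq b, hsplit]
  exact (posSemidef_gram ℝ u).det_le_det_add_s7 (posSemidef_gram ℝ (v - u))

theorem exists_comp_eq_and_det_gram_mem_Ioo {k : E} (hk : k ∈ LinearMap.ker π) (hk' : k ∉ Mᗮ)
    [Fintype ι] [DecidableEq ι] (b : OrthonormalBasis ι ℝ M) :
    ∃ v : ι → E, π ∘ v = b ∧ (gram ℝ v).det ∈ Set.Ioo 0 1 := by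
  have hb : Orthonormal ℝ fun i => (b i : E) := b.orthonormal.comp_linearIsometry M.subtypeₗᵢ
  obtain ⟨i₀, hi₀⟩ : ∃ i, ⟪(b i : E), k⟫_ℝ ≠ 0 := by
    by_contra! hc
    exact hk' (b.toBasis.mem_orthogonal_of_inner_eq_zero (by simpa using hc))
  have hC : 0 < ∑ i, ⟪(b i : E), k⟫_ℝ ^ 2 :=
    Finset.sum_pos' (fun i _ => sq_nonneg _) ⟨i₀, Finset.mem_univ _, by positivity⟩
  obtain ⟨t, ht⟩ := exists_one_add_mul_mem_Ioo hC (sq_nonneg ‖k‖)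
  refine ⟨fun i => b i + (t * ⟪(b i : E), k⟫_ℝ) • k, funext fun i => ?_, ?_⟩
  · simp [hπ, LinearMap.mem_ker.1 hk]
  · rwa [det_gram_orthonormal_add_smul hb]

end Projection

theorem comass_pullback_eq_one_iff_general {E : Type*} [NormedAddCommGroup E]
    [InnerProductSpace ℝ E]
    (m : ℕ)
    (M : Submodule ℝ E)
    (π : E →ₗ[ℝ] M) (hπ : ∀ x : M, π (x : E) = x)
    (ω : M [⋀^Fin m]→ₗ[ℝ] ℝ)
    (b : OrthonormalBasis (Fin m) ℝ M) (hω : ω ⇑b = 1) :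
    comassIP m (ω.compLinearMap π) = 1 ↔ LinearMap.ker π = Mᗮ := by
  have hω_eq : ω = b.toBasis.det := by simpa [hω] using ω.eq_smul_basis_det b.toBasis
  have hpullback : ∀ v, ω.compLinearMap π v = b.toBasis.det (π ∘ v) := by
    intro v; rw [hω_eq]; rfl
  have hpullback_eq_one : ∀ v, π ∘ v = b → ω.compLinearMap π v = 1 :=
    fun v hv => (congrArg ω hv).trans hω
  have hgram_b : gramIP m (fun i => (b i : E)) = 1 := gram_eq_one_iff_orthonormal.2 b.orthonormal
  refine ⟨fun h => ker_eq_orthogonal_of_ker_le hπ fun k hk => by_contra fun hk' => ?_,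
    fun h => IsGreatest.csSup_eq ⟨⟨fun i => b i, by simp [hgram_b], ?_⟩, ?_⟩⟩
  · obtain ⟨v, hv, hpos, hlt⟩ := exists_comp_eq_and_det_gram_mem_Ioo hπ hk hk' b
    have hle := div_sqrt_det_le_comassIP (h ▸ one_ne_zero) (v := v) hpos.ne'
    rw [h, hpullback_eq_one v hv, gramIP_eq_gram, div_le_one (Real.sqrt_pos.2 hpos),
      Real.one_le_sqrt] at hle
    exact hlt.not_ge hle
  · rw [hgram_b, det_one, Real.sqrt_one, div_one, hpullback_eq_one _ (funext fun i => hπ (b i))]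
  · rintro _ ⟨v, hv, rfl⟩
    refine (div_le_one (Real.sqrt_pos.2 ((posSemidef_gram ℝ v).det_nonneg.lt_of_ne' hv))).2 ?_
    rw [hpullback]
    exact (le_abs_self _).trans (Real.abs_le_sqrt (basis_det_comp_sq_le_det_gram hπ h.le b v))

/-- Comass One Lemma: the pullback of the volume form has comass one iff the
fiber (kernel of the projection) is perpendicular to `M`. -/
theorem comass_pullback_eq_one_iff {E : Type*} [NormedAddCommGroup E]
    [InnerProductSpace ℝ E] [FiniteDimensional ℝ E]
    (m : ℕ) (hm : 1 ≤ m) (hm' : m ≤ Module.finrank ℝ E)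
    (M : Submodule ℝ E) (hM : Module.finrank ℝ M = m)
    (π : E →ₗ[ℝ] M) (hπ : ∀ x : M, π (x : E) = x)
    (ω : M [⋀^Fin m]→ₗ[ℝ] ℝ)
    (b : OrthonormalBasis (Fin m) ℝ M) (hω : ω ⇑b = 1) :
    comassIP m (ω.compLinearMap π) = 1 ↔ LinearMap.ker π = Mᗮ :=
  comass_pullback_eq_one_iff_general m M π hπ ω b hω
end
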